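/- arXiv:1603.02006 — 3 statements merged into one kernel-verified Lean document; each statement's English description precedes it below -/
import Mathlib

section
/- Let K be a field, n ≥ 2, and let b_1, …, b_{n-1} ∈ K be nonzero. Suppose w_1, …, w_{n-1} ∈ K are nonzero and satisfy, for each i, the equation w_i + Σ_{j≠i} b_j w_i / w_j − b_i / w_i − Σ_{j≠i} b_i w_j / w_i = 0. Set L = Σ_{i=1}^{n-1} w_i. Then for every i one has (w_i − b_i/w_i)(1 + L) = 0; equivalently (w_i^2 − b_i)(1 + L) = 0. -/
/-!
Writing `S = ∑ j, b j / w j` and `L = ∑ j, w j`, the `i`-th critical equation is the identity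
`w i * (1 + S) = (b i / w i) * (1 + L)`. Summing these over `i` gives `L * (1 + S) = S * (1 + L)`,
i.e. `L = S`, and then the `i`-th equation reads `w i * (1 + L) = (b i / w i) * (1 + L)`.
-/

open Finset

lemma sum_eq_sum_of_forall_mul_one_add_sum {ι R : Type*} [Fintype ι] [CommRing R]
    (x y : ι → R) (h : ∀ i, x i * (1 + ∑ j, y j) = y i * (1 + ∑ j, x j)) :
    ∑ i, x i = ∑ i, y i := by
  have hsum : (∑ i, x i) * (1 + ∑ j, y j) = (∑ i, y i) * (1 + ∑ j, x j) := by
    simp only [Finset.sum_mul, h]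
  linear_combination hsum

lemma critical_eq_expr_eq {ι K : Type*} [Fintype ι] [DecidableEq ι] [Field K]
    (b w : ι → K) (i : ι) :
    w i + (∑ j ∈ univ.erase i, b j * w i / w j)
        - b i / w i - (∑ j ∈ univ.erase i, b i * w j / w i)
      = w i * (1 + ∑ j, b j / w j) - b i / w i * (1 + ∑ j, w j) := by
  have hb : ∑ j ∈ univ.erase i, b j * w i / w j = w i * (∑ j, b j / w j - b i / w i) := by
    rw [← sum_erase_eq_sub (mem_univ i), mul_sum]
    exact sum_congr rfl fun j _ => by ring
  have hw : ∑ j ∈ univ.erase i, b i * w j / w i = b i / w i * (∑ j, w j - w i) := by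
    rw [← sum_erase_eq_sub (mem_univ i), mul_sum]
    exact sum_congr rfl fun j _ => by ring
  rw [hb, hw]
  ring

theorem critical_eqs_factor_general
    {K : Type*} [Field K] (n : ℕ)
    (b w : Fin (n - 1) → K)
    (hw : ∀ i, w i ≠ 0)
    (heq : ∀ i, w i + (∑ j ∈ univ.erase i, b j * w i / w j)
        - b i / w i - (∑ j ∈ univ.erase i, b i * w j / w i) = 0)
    (L : K) (hL : L = ∑ i, w i) :
    ∀ i, (w i - b i / w i) * (1 + L) = 0 ∧ (w i ^ 2 - b i) * (1 + L) = 0 := by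
  have hcrit : ∀ i, w i * (1 + ∑ j, b j / w j) = b i / w i * (1 + ∑ j, w j) := fun i =>
    sub_eq_zero.mp ((critical_eq_expr_eq b w i).symm.trans (heq i))
  have hLS : L = ∑ j, b j / w j := hL.trans (sum_eq_sum_of_forall_mul_one_add_sum _ _ hcrit)
  intro i
  have hfirst : (w i - b i / w i) * (1 + L) = 0 := by
    rw [← hL] at hcrit
    linear_combination hcrit i + w i * hLS
  refine ⟨hfirst, ?_⟩
  linear_combination w i * hfirst + (1 + L) * mul_div_cancel₀ (b i) (hw i)

theorem critical_eqs_factor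
    {K : Type*} [Field K] (n : ℕ) (hn : 2 ≤ n)
    (b w : Fin (n - 1) → K)
    (hb : ∀ i, b i ≠ 0) (hw : ∀ i, w i ≠ 0)
    (heq : ∀ i, w i + (∑ j ∈ univ.erase i, b j * w i / w j)
        - b i / w i - (∑ j ∈ univ.erase i, b i * w j / w i) = 0)
    (L : K) (hL : L = ∑ i, w i) :
    ∀ i, (w i - b i / w i) * (1 + L) = 0 ∧ (w i ^ 2 - b i) * (1 + L) = 0 :=
  critical_eqs_factor_general n b w hw heq L hL
end

section
/- Let K be a field and let b_1, …, b_n, T ∈ K be nonzero. Suppose w_1, …, w_{n-1}, u ∈ K are nonzero, satisfy for each i = 1,…,n−1 the equation w_i + Σ_{j≠i} b_j w_i/w_j − b_i/w_i − Σ_{j≠i} b_i w_j/w_i = 0, and also u^2 = b_n T (1 + Σ_{i=1}^{n-1} w_i)^2 (the equation ∂_u W = 0). Then 1 + Σ_{i=1}^{n-1} w_i ≠ 0 and w_i^2 = b_i for every i. -/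
/-!
Write `L = ∑ wᵢ` and `S = ∑ bᵢ / wᵢ`. The `i`-th critical-point equation is
`wᵢ (1 + S) = (bᵢ / wᵢ) (1 + L)`; summing over `i` gives `L (1 + S) = S (1 + L)`, i.e. `L = S`.
The equation `∂W/∂u = 0` rules out `1 + L = 0` (it would force `u = 0`), so cancelling `1 + L`
leaves `wᵢ = bᵢ / wᵢ`.
-/

open Finset

section

variable {ι K : Type*} [Fintype ι] [Field K]

theorem add_sum_erase_sub_sub_sum_erase_eq [DecidableEq ι] (w b : ι → K) (i : ι) :
    w i + (∑ j ∈ univ.erase i, b j * w i / w j) - b i / w i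
        - (∑ j ∈ univ.erase i, b i * w j / w i)
      = w i * (1 + ∑ j, b j / w j) - b i / w i * (1 + ∑ j, w j) := by
  have hS : ∑ j ∈ univ.erase i, b j * w i / w j = w i * (∑ j, b j / w j - b i / w i) := by
    rw [← sum_erase_eq_sub (mem_univ i), mul_sum]
    exact sum_congr rfl fun j _ => by ring
  have hL : ∑ j ∈ univ.erase i, b i * w j / w i = b i / w i * (∑ j, w j - w i) := by
    rw [← sum_erase_eq_sub (mem_univ i), mul_sum]
    exact sum_congr rfl fun j _ => by ring
  rw [hS, hL]
  ring

theorem sum_eq_sum_of_mul_one_add_sum_eq {x c : ι → K}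
    (h : ∀ i, x i * (1 + ∑ j, c j) = c i * (1 + ∑ j, x j)) : ∑ i, x i = ∑ i, c i := by
  have hsum : (∑ i, x i) * (1 + ∑ j, c j) = (∑ i, c i) * (1 + ∑ j, x j) := by
    rw [sum_mul, sum_mul]
    exact sum_congr rfl fun i _ => h i
  linear_combination hsum

theorem eq_of_mul_one_add_sum_eq {x c : ι → K}
    (h : ∀ i, x i * (1 + ∑ j, c j) = c i * (1 + ∑ j, x j)) (h0 : 1 + ∑ j, x j ≠ 0) :
    x = c := by
  funext i
  have hi := h i
  rw [← sum_eq_sum_of_mul_one_add_sum_eq h] at hi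
  exact mul_right_cancel₀ h0 hi

end

theorem critical_points_force_wsq_general
    {K : Type*} [Field K] (m : ℕ)
    (b : Fin (m + 1) → K) (T : K)
    (w : Fin m → K) (u : K)
    (hw : ∀ i, w i ≠ 0) (hu : u ≠ 0)
    (heq : ∀ i, w i + (∑ j ∈ univ.erase i, b j.castSucc * w i / w j)
        - b i.castSucc / w i - (∑ j ∈ univ.erase i, b i.castSucc * w j / w i) = 0)
    (hueq : u ^ 2 = b (Fin.last m) * T * (1 + ∑ i, w i) ^ 2) :
    (1 + ∑ i, w i ≠ 0) ∧ ∀ i, w i ^ 2 = b i.castSucc := by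
  have hL : 1 + ∑ i, w i ≠ 0 := by
    intro h
    exact hu (pow_eq_zero_iff two_ne_zero |>.mp (by rw [hueq, h]; ring))
  have hcrit : ∀ i, w i * (1 + ∑ j, b j.castSucc / w j) = b i.castSucc / w i * (1 + ∑ j, w j) :=
    fun i => sub_eq_zero.mp <|
      (add_sum_erase_sub_sub_sum_erase_eq w (fun j => b j.castSucc) i).symm.trans (heq i)
  refine ⟨hL, fun i => ?_⟩
  have hi := congrFun (eq_of_mul_one_add_sum_eq hcrit hL) i
  rw [sq]
  nth_rewrite 2 [hi]
  exact mul_div_cancel₀ _ (hw i)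

theorem critical_points_force_wsq
    {K : Type*} [Field K] (m : ℕ) (hm : 1 ≤ m)
    (b : Fin (m + 1) → K) (T : K)
    (hb : ∀ i, b i ≠ 0) (hT : T ≠ 0)
    (w : Fin m → K) (u : K)
    (hw : ∀ i, w i ≠ 0) (hu : u ≠ 0)
    (heq : ∀ i, w i + (∑ j ∈ univ.erase i, b j.castSucc * w i / w j)
        - b i.castSucc / w i - (∑ j ∈ univ.erase i, b i.castSucc * w j / w i) = 0)
    (hueq : u ^ 2 = b (Fin.last m) * T * (1 + ∑ i, w i) ^ 2) :
    (1 + ∑ i, w i ≠ 0) ∧ ∀ i, w i ^ 2 = b i.castSucc :=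
  critical_points_force_wsq_general m b T w u hw hu heq hueq
end

section
/- Let A = ⊕_{d ≥ 0} A_d be a graded-commutative unital ring graded by nonnegative integers, generated as a ring by A_0 and A_1. Let m : A → A be an additive map, and let * : A × A → A be a biadditive product such that: (i) m satisfies the Leibniz-type rule m(x * y) = ± (m(x) * y) ± (x * m(y)) for homogeneous x, y (for some fixed sign convention); (ii) for homogeneous x ∈ A_p, y ∈ A_q, the difference x * y − x·y (where · is the ring product) lies in ⊕_{d < p+q} A_d; (iii) m vanishes on A_0 and on A_1. Then m = 0 on all of A. -/
theorem graded_leibniz_vanishing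
    {A : Type*} [Ring A] (𝒜 : ℕ → AddSubgroup A) [GradedRing 𝒜]
    (hcomm : ∀ p q : ℕ, ∀ x ∈ 𝒜 p, ∀ y ∈ 𝒜 q, x * y = ((-1 : ℤ) ^ (p * q)) • (y * x))
    (hgen : Subring.closure ((𝒜 0 : Set A) ∪ (𝒜 1 : Set A)) = ⊤)
    (m : A →+ A) (star : A →+ A →+ A)
    (σ₁ σ₂ : ℕ → ℕ → ℤ)
    (hσ₁ : ∀ p q, σ₁ p q = 1 ∨ σ₁ p q = -1)
    (hσ₂ : ∀ p q, σ₂ p q = 1 ∨ σ₂ p q = -1)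
    (hLeibniz : ∀ p q : ℕ, ∀ x ∈ 𝒜 p, ∀ y ∈ 𝒜 q,
      m (star x y) = σ₁ p q • star (m x) y + σ₂ p q • star x (m y))
    (hdef : ∀ p q : ℕ, ∀ x ∈ 𝒜 p, ∀ y ∈ 𝒜 q,
      star x y - x * y ∈ ⨆ d < p + q, 𝒜 d)
    (h0 : ∀ x ∈ 𝒜 0, m x = 0) (h1 : ∀ x ∈ 𝒜 1, m x = 0) :
    ∀ x : A, m x = 0 := by
  classical
  -- generating set of products of two positive-degree homogeneous elements
  set gen : ℕ → Set A := fun n =>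
    {z | ∃ p q : ℕ, 1 ≤ p ∧ 1 ≤ q ∧ p + q = n ∧ ∃ a ∈ 𝒜 p, ∃ b ∈ 𝒜 q, z = a * b} with hgen'
  set D : ℕ → AddSubgroup A := fun n => AddSubgroup.closure (gen n) with hD
  set F : ℕ → AddSubgroup A := fun n => if n ≤ 1 then 𝒜 n else D n with hFdef
  -- absorption of degree 0 on the left
  have absL : ∀ n : ℕ, ∀ c ∈ 𝒜 0, ∀ y ∈ D n, c * y ∈ D n := by
    intro n c hc y hy
    have : D n ≤ (D n).comap (AddMonoidHom.mulLeft c) := by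
      rw [hD]
      apply AddSubgroup.closure_le _ |>.mpr
      rintro z ⟨p, q, hp, hq, hpq, a, ha, b, hb, rfl⟩
      refine AddSubgroup.mem_comap.mpr ?_
      show c * (a * b) ∈ D n
      have hca : c * a ∈ 𝒜 p := by
        have := SetLike.mul_mem_graded hc ha
        rwa [zero_add] at this
      apply AddSubgroup.subset_closure
      exact ⟨p, q, hp, hq, hpq, c * a, hca, b, hb, by rw [mul_assoc]⟩
    exact this hy
  have absR : ∀ n : ℕ, ∀ c ∈ 𝒜 0, ∀ y ∈ D n, y * c ∈ D n := by
    intro n c hc y hy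
    have : D n ≤ (D n).comap (AddMonoidHom.mulRight c) := by
      rw [hD]
      apply AddSubgroup.closure_le _ |>.mpr
      rintro z ⟨p, q, hp, hq, hpq, a, ha, b, hb, rfl⟩
      refine AddSubgroup.mem_comap.mpr ?_
      show (a * b) * c ∈ D n
      have hbc : b * c ∈ 𝒜 q := by
        have := SetLike.mul_mem_graded hb hc
        rwa [add_zero] at this
      apply AddSubgroup.subset_closure
      exact ⟨p, q, hp, hq, hpq, a, ha, b * c, hbc, by rw [mul_assoc]⟩
    exact this hy
  -- homogeneous elements lie in F
  have hF_homog : ∀ i n : ℕ, ∀ x ∈ 𝒜 i, x ∈ F n → True := fun _ _ _ _ _ => trivial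
  -- product of homogeneous pieces lands in F
  have hmulF : ∀ i j : ℕ, ∀ x ∈ 𝒜 i, ∀ y ∈ 𝒜 j, x ∈ F i → y ∈ F j → x * y ∈ F (i + j) := by
    intro i j x hxi y hyj hxF hyF
    by_cases h : i + j ≤ 1
    · simp only [hFdef, if_pos h]
      exact SetLike.mul_mem_graded hxi hyj
    · simp only [hFdef, if_neg h]
      push_neg at h
      rcases Nat.eq_zero_or_pos i with hi | hi
      · subst hi
        have hj : ¬ j ≤ 1 := by omega
        rw [hFdef] at hyF; simp only [if_neg hj] at hyF
        simpa using absL j x hxi y hyF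
      · rcases Nat.eq_zero_or_pos j with hj | hj
        · subst hj
          have hi' : ¬ i ≤ 1 := by omega
          rw [hFdef] at hxF; simp only [if_neg hi'] at hxF
          simpa using absR i y hyj x hxF
        · exact AddSubgroup.subset_closure ⟨i, j, hi, hj, rfl, x, hxi, y, hyj, rfl⟩
  -- every homogeneous element lies in F of its degree
  have key : ∀ n : ℕ, ∀ x ∈ 𝒜 n, x ∈ F n := by
    have main : ∀ x : A, ∀ n : ℕ, (DirectSum.decompose 𝒜 x n : A) ∈ F n := by
      intro x
      have hx : x ∈ Subring.closure ((𝒜 0 : Set A) ∪ (𝒜 1 : Set A)) := by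
        rw [hgen]; trivial
      induction hx using Subring.closure_induction with
      | mem z hz =>
        intro n
        rcases hz with hz | hz
        · by_cases hn : n = 0
          · subst hn
            rw [DirectSum.decompose_of_mem_same 𝒜 hz]
            simp only [hFdef, if_pos (by norm_num : (0:ℕ) ≤ 1)]
            exact hz
          · rw [DirectSum.decompose_of_mem_ne 𝒜 hz (Ne.symm hn)]
            exact zero_mem _
        · by_cases hn : n = 1
          · subst hn
            rw [DirectSum.decompose_of_mem_same 𝒜 hz]
            simp only [hFdef, if_pos le_rfl]
            exact hz
          · rw [DirectSum.decompose_of_mem_ne 𝒜 hz (Ne.symm hn)]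
            exact zero_mem _
      | zero =>
        intro n
        rw [DirectSum.decompose_zero]
        simpa using zero_mem (F n)
      | one =>
        intro n
        by_cases hn : n = 0
        · subst hn
          rw [DirectSum.decompose_of_mem_same 𝒜 SetLike.GradedOne.one_mem]
          simp only [hFdef, if_pos (by norm_num : (0:ℕ) ≤ 1)]
          exact SetLike.GradedOne.one_mem
        · rw [DirectSum.decompose_of_mem_ne 𝒜 SetLike.GradedOne.one_mem (Ne.symm hn)]
          exact zero_mem _
      | add a b ha hb iha ihb =>
        intro n
        rw [DirectSum.decompose_add]
        simpa using add_mem (iha n) (ihb n)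
      | neg a ha iha =>
        intro n
        have hc : ((-(DirectSum.decompose 𝒜 a)) n : A) = -((DirectSum.decompose 𝒜 a) n : A) := by
          rw [DFinsupp.neg_apply]; exact AddSubgroup.coe_neg _ _
        rw [DirectSum.decompose_neg, hc]
        exact neg_mem (iha n)
      | mul a b ha hb iha ihb =>
        intro n
        rw [DirectSum.decompose_mul, DirectSum.coe_mul_apply 𝒜]
        apply sum_mem
        rintro ⟨i, j⟩ hij
        simp only [Finset.mem_filter, Finset.mem_product] at hij
        obtain ⟨-, hijn⟩ := hij
        have := hmulF i j _ (SetLike.coe_mem _) _ (SetLike.coe_mem _) (iha i) (ihb j)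
        rwa [hijn] at this
    intro n x hx
    have := main x n
    rwa [DirectSum.decompose_of_mem_same 𝒜 hx] at this
  -- main induction: m vanishes on each graded piece
  have vanish : ∀ n : ℕ, ∀ x ∈ 𝒜 n, m x = 0 := by
    intro n
    induction n using Nat.strong_induction_on with
    | _ n ih =>
      intro x hx
      by_cases hn : n ≤ 1
      · interval_cases n
        · exact h0 x hx
        · exact h1 x hx
      · have hxD : x ∈ D n := by
          have := key n x hx
          simp only [hFdef, if_neg hn] at this
          exact this
        have hDker : D n ≤ m.ker := by
          rw [hD]
          apply AddSubgroup.closure_le _ |>.mpr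
          rintro z ⟨p, q, hp, hq, hpq, a, ha, b, hb, rfl⟩
          have hma : m a = 0 := ih p (by omega) a ha
          have hmb : m b = 0 := ih q (by omega) b hb
          have hstar : m (star a b) = 0 := by
            rw [hLeibniz p q a ha b hb, hma, hmb]
            simp
          have hlow : star a b - a * b ∈ ⨆ d < p + q, 𝒜 d := hdef p q a ha b hb
          have hlowker : (⨆ d < p + q, 𝒜 d) ≤ m.ker := by
            apply iSup₂_le
            intro d hd
            intro y hy
            exact ih d (by omega) y hy
          have h2 : m (star a b - a * b) = 0 :=
            AddMonoidHom.mem_ker.mp (hlowker hlow)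
          have h3 : m (a * b) = m (star a b) - m (star a b - a * b) := by
            rw [map_sub, sub_sub_cancel]
          simp only [SetLike.mem_coe, AddMonoidHom.mem_ker]
          rw [h3, hstar, h2, sub_zero]
        exact hDker hxD
  intro x
  conv_lhs => rw [← DirectSum.sum_support_decompose 𝒜 x]
  rw [map_sum]
  apply Finset.sum_eq_zero
  intro i _
  exact vanish i _ (SetLike.coe_mem _)
end
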